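/- arXiv:1506.05018 — 6 statements merged into one kernel-verified Lean document; each statement's English description precedes it below -/
import Mathlib

section
/- Let (G, (D, ⊓), δ) be a pattern structure and ψ a kernel operator on D. If A ⊆ G is an extent of the o-projected pattern structure (G, (ψ(D), ⊓_ψ), ψ∘δ) — i.e., A = (A^◇)^◇ computed with descriptions ψ∘δ — then A is an extent of the original pattern structure (G, (D, ⊓), δ). -/
/-- for a pattern structure (G, (D, ⊓), δ) (descriptions forming a
complete lattice) and a kernel operator ψ on D, every extent of the o-projected
pattern structure (G, (ψ(D), ⊓_ψ), ψ∘δ) — where A^◇ computed in ψ(D) is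
ψ(⨅_{g∈A} δ g) and d^◇ = {g | d ⊑ ψ∘δ(g)} — is an extent of the original pattern
structure. -/
theorem stmt_10 {G D : Type*} [CompleteLattice D] (δ : G → D) (ψ : D → D)
    (hmono : Monotone ψ) (hcontr : ∀ x, ψ x ≤ x) (hidem : ∀ x, ψ (ψ x) = ψ x)
    (A : Set G)
    (hA : A = {g : G | ψ (⨅ h ∈ A, δ h) ≤ ψ (δ g)}) :
    A = {g : G | (⨅ h ∈ A, δ h) ≤ δ g} := by
  ext g
  simp only [Set.mem_setOf_eq]
  constructor
  · intro hg
    exact biInf_le δ hg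
  · intro hg
    rw [hA]
    exact hmono hg
end

section
/- Let (G, (D, ⊓), δ) be a pattern structure where D is a complete lattice, and let ψ₁ ≤ ψ₂ be kernel operators on D (i.e., the fixed-point set of ψ₁ is contained in that of ψ₂). Then every extent of the o-projected pattern structure ψ₁(PS) is an extent of the o-projected pattern structure ψ₂(PS). -/
/-- for a pattern structure (G, (D, ⊓), δ) with D a complete lattice and
kernel operators ψ₁ ≤ ψ₂ (the fixed-point set of ψ₁ contained in that of ψ₂), every
extent of the o-projected pattern structure ψ₁(PS) is an extent of ψ₂(PS). -/
theorem stmt_13 {G D : Type*} [CompleteLattice D] (δ : G → D) (ψ₁ ψ₂ : D → D)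
    (hmono₁ : Monotone ψ₁) (hcontr₁ : ∀ x, ψ₁ x ≤ x) (hidem₁ : ∀ x, ψ₁ (ψ₁ x) = ψ₁ x)
    (hmono₂ : Monotone ψ₂) (hcontr₂ : ∀ x, ψ₂ x ≤ x) (hidem₂ : ∀ x, ψ₂ (ψ₂ x) = ψ₂ x)
    (hle : {d : D | ψ₁ d = d} ⊆ {d : D | ψ₂ d = d})
    (A : Set G)
    (hA : A = {g : G | ψ₁ (⨅ h ∈ A, δ h) ≤ ψ₁ (δ g)}) :
    A = {g : G | ψ₂ (⨅ h ∈ A, δ h) ≤ ψ₂ (δ g)} := by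
  set m := ⨅ h ∈ A, δ h with hm
  ext g
  simp only [Set.mem_setOf_eq]
  constructor
  · intro hg
    have hmg : m ≤ δ g := biInf_le δ hg
    calc ψ₂ m = ψ₂ (ψ₂ m) := (hidem₂ m).symm
      _ ≤ ψ₂ (δ g) := hmono₂ (le_trans (hcontr₂ m) hmg)
  · intro hg
    have hfix : ψ₂ (ψ₁ m) = ψ₁ m := hle (hidem₁ m)
    have h1 : ψ₁ m ≤ δ g := by
      calc ψ₁ m = ψ₂ (ψ₁ m) := hfix.symm
        _ ≤ ψ₂ m := hmono₂ (hcontr₁ m)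
        _ ≤ ψ₂ (δ g) := hg
        _ ≤ δ g := hcontr₂ _
    have : ψ₁ m ≤ ψ₁ (δ g) := by
      calc ψ₁ m = ψ₁ (ψ₁ m) := (hidem₁ m).symm
        _ ≤ ψ₁ (δ g) := hmono₁ h1
    rw [hA]; exact this
end

section
/- Let PS = (G, (D, ⊓), δ) be a pattern structure and (G, M, I) a representation context of PS (M ⊆ D is ⋁-dense in the lattice D_δ of all infima of subsets of δ(G), and (g, m) ∈ I ⟺ m ⊑ δ(g)). Then for any A ⊆ G, B ⊆ M, d ∈ D the following are equivalent: (1) (A, d) is a pattern concept of PS and B = {m ∈ M | m ⊑ d}; (2) (A, B) is a formal concept of (G, M, I) and d = ⋁B. -/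
/-- Theorem 1 on representation contexts: let (G,(D,⊓),δ) be a pattern
structure (D a complete lattice), D_δ = {d | ∃ A ⊆ G, ⨅_{g∈A} δ g = d} the set of
pattern intents, with join ⋁X = ⨅{e ∈ D_δ | ∀ x ∈ X, x ≤ e}, and let M ⊆ D be
⋁-dense in D_δ.  The representation context (G,M,I) has (g,m) ∈ I ⟺ m ⊑ δ(g).
Then for A ⊆ G, B ⊆ M, d ∈ D: (A,d) is a pattern concept with B = {m ∈ M | m ⊑ d}
iff (A,B) is a formal concept of (G,M,I) with d = ⋁B. -/
theorem stmt_14 {G D : Type*} [CompleteLattice D] (δ : G → D) (M : Set D)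
    (hdense : ∀ d ∈ {d : D | ∃ A : Set G, (⨅ g ∈ A, δ g) = d},
      ∃ X ⊆ M,
        sInf {e : D | (∃ A : Set G, (⨅ g ∈ A, δ g) = e) ∧ ∀ x ∈ X, x ≤ e} = d)
    (A : Set G) (B : Set D) (hB : B ⊆ M) (d : D) :
    ((⨅ g ∈ A, δ g) = d ∧ {g : G | d ≤ δ g} = A ∧ B = {m ∈ M | m ≤ d}) ↔
    ({m ∈ M | ∀ g ∈ A, m ≤ δ g} = B ∧ {g : G | ∀ m ∈ B, m ≤ δ g} = A ∧
      d = sInf {e : D | (∃ A' : Set G, (⨅ g ∈ A', δ g) = e) ∧ ∀ x ∈ B, x ≤ e}) := by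
  constructor
  · rintro ⟨hd, hA, rfl⟩
    obtain ⟨X, hXM, hX⟩ := hdense d ⟨A, hd⟩
    have hXd : ∀ x ∈ X, x ≤ d := fun x hx => by
      rw [← hX]; exact le_sInf fun e he => he.2 x hx
    have hAd : ∀ g ∈ A, d ≤ δ g := fun g hg => hd ▸ iInf₂_le g hg
    refine ⟨?_, ?_, ?_⟩
    · ext m
      simp only [Set.mem_setOf_eq]
      exact and_congr_right fun _ =>
        ⟨fun h => hd ▸ le_iInf₂ h, fun h g hg => h.trans (hAd g hg)⟩
    · ext g
      simp only [Set.mem_setOf_eq]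
      constructor
      · intro h
        rw [← hA]
        show d ≤ δ g
        rw [← hX]
        exact sInf_le ⟨⟨{g}, by simp⟩, fun x hx => h x ⟨hXM hx, hXd x hx⟩⟩
      · intro hg m hm
        have hdg : d ≤ δ g := by rw [← hA] at hg; exact hg
        exact hm.2.trans hdg
    · refine le_antisymm ?_ (sInf_le ⟨⟨A, hd⟩, fun x hx => hx.2⟩)
      refine le_sInf fun e he => hX.symm.trans_le (sInf_le ⟨he.1, fun x hx => he.2 x ⟨hXM hx, hXd x hx⟩⟩)
  · rintro ⟨hB1, hA, rfl⟩
    set T := {e : D | (∃ A' : Set G, (⨅ g ∈ A', δ g) = e) ∧ ∀ x ∈ B, x ≤ e} with hT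
    set c := ⨅ g ∈ A, δ g with hc
    have hBc : ∀ x ∈ B, x ≤ c := fun x hx => by
      rw [← hB1] at hx; exact le_iInf₂ hx.2
    have hBlow : ∀ x ∈ B, x ≤ sInf T := fun x hx =>
      le_sInf fun e he => he.2 x hx
    obtain ⟨X, hXM, hX⟩ := hdense c ⟨A, rfl⟩
    have hXc : ∀ x ∈ X, x ≤ c := fun x hx => by
      rw [← hX]; exact le_sInf fun e he => he.2 x hx
    have hXB : X ⊆ B := fun x hx => by
      rw [← hB1]
      exact ⟨hXM hx, fun g hg => (hXc x hx).trans (iInf₂_le g hg)⟩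
    have hdc : sInf T = c := by
      refine le_antisymm (sInf_le ⟨⟨A, rfl⟩, hBc⟩) ?_
      rw [← hX]
      exact le_sInf fun e he => sInf_le ⟨he.1, fun x hx => he.2 x (hXB hx)⟩
    refine ⟨hdc.symm, ?_, ?_⟩
    · ext g
      simp only [Set.mem_setOf_eq]
      constructor
      · intro h
        rw [← hA]
        exact fun m hm => (hBlow m hm).trans h
      · intro hg
        rw [← hA] at hg
        exact sInf_le ⟨⟨{g}, by simp⟩, hg⟩
    · ext m
      simp only [Set.mem_setOf_eq]
      constructor
      · intro hm
        exact ⟨hB hm, hBlow m hm⟩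
      · rintro ⟨hmM, hmd⟩
        rw [← hB1]
        exact ⟨hmM, fun g hg => (hmd.trans (hdc.le.trans (iInf₂_le g hg)))⟩
end

section
/- Let PS = (G, (D, ⊓), δ) be a pattern structure with D a complete lattice, and ψ a kernel operator on D whose fixed-point set contains ⊥ and is closed under joins. Then any representation context of the o-projected pattern structure ψ(PS) is simpler (≤_S) than the representation context R(PS) with attribute set D_δ: every attribute extent of R(ψ(PS)) is an extent of PS, hence an intersection of attribute extents of R(PS). -/
/-- let (G,(D,⊓),δ) be a pattern structure with D a complete lattice and
ψ a kernel operator whose fixed-point set contains ⊥ and is closed under joins.  Any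
representation context of the o-projected pattern structure ψ(PS) — its attributes n
lying in ψ(D), with attribute extents {g | n ⊑ ψ∘δ(g)} — is simpler (≤_S) than the
representation context R(PS) with attribute set D_δ: every attribute extent of
R(ψ(PS)) is an intersection of attribute extents of R(PS). -/
theorem stmt_17 {G D : Type*} [CompleteLattice D] (δ : G → D) (ψ : D → D)
    (hmono : Monotone ψ) (hcontr : ∀ x, ψ x ≤ x) (hidem : ∀ x, ψ (ψ x) = ψ x)
    (hbot : ψ ⊥ = ⊥)
    (hjoin : ∀ X ⊆ {d : D | ψ d = d}, ψ (sSup X) = sSup X)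
    (N : Set D) (hN : N ⊆ {d : D | ψ d = d}) :
    ∀ n ∈ N, ∃ B ⊆ {d : D | ∃ A : Set G, (⨅ g ∈ A, δ g) = d},
      {g : G | n ≤ ψ (δ g)} = {g : G | ∀ m ∈ B, m ≤ δ g} := by
  intro n hn
  have hfix : ψ n = n := hN hn
  set E : Set G := {g | n ≤ δ g} with hE
  set m : D := ⨅ g ∈ E, δ g with hm
  refine ⟨{m}, ?_, ?_⟩
  · intro x hx
    simp only [Set.mem_singleton_iff] at hx
    exact ⟨E, hx.symm⟩
  · have hext : {g : G | n ≤ ψ (δ g)} = E := by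
      ext g
      constructor
      · intro h; exact le_trans h (hcontr _)
      · intro h
        calc n = ψ n := hfix.symm
          _ ≤ ψ (δ g) := hmono h
    rw [hext]
    ext g
    simp only [Set.mem_setOf_eq, Set.mem_singleton_iff, forall_eq]
    constructor
    · intro hg
      exact biInf_le δ hg
    · intro hg
      have hnm : n ≤ m := le_iInf₂ fun g' hg' => hg'
      exact le_trans hnm hg
end

section
/- Let PS = (G, (D, ⊓), δ) be a pattern structure with D a complete lattice, and let K = (G, M, I) be a formal context with K ≤_S R(PS), i.e., every attribute extent m' of K is an extent of PS. Then there exists a kernel operator ψ on D such that K is a representation context of the o-projected pattern structure ψ(PS): namely, take D_M = {A^◇ | A = m' for m ∈ M} and let ψ(D) be the join-closure of D_M in D; then the incidence relation satisfies (g, m) ∈ I ⟺ f(m) ⊑ ψ∘δ(g), where f(m) = (m')^◇. -/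
/-- let (G,(D,⊓),δ) be a pattern structure with D a complete lattice,
and K = (G,M,I) a formal context with K ≤_S R(PS), i.e. every attribute extent
m' = {g | I g m} is an extent of PS.  Then there is a kernel operator ψ on D whose
fixed-point set is the join-closure of D_M = {(m')^◇ | m ∈ M} and such that K is a
representation context of ψ(PS): each (m')^◇ is fixed by ψ and
(g,m) ∈ I ⟺ (m')^◇ ⊑ ψ∘δ(g). -/
theorem stmt_18 {G M D : Type*} [CompleteLattice D] (δ : G → D) (I : G → M → Prop)
    (hext : ∀ m : M,
      {g : G | I g m} = {g : G | (⨅ h ∈ {g' : G | I g' m}, δ h) ≤ δ g}) :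
    ∃ ψ : D → D, Monotone ψ ∧ (∀ x, ψ x ≤ x) ∧ (∀ x, ψ (ψ x) = ψ x) ∧
      (∀ m : M, ψ (⨅ h ∈ {g' : G | I g' m}, δ h) = ⨅ h ∈ {g' : G | I g' m}, δ h) ∧
      (∀ g m, I g m ↔ (⨅ h ∈ {g' : G | I g' m}, δ h) ≤ ψ (δ g)) ∧
      (∀ d : D, ψ d = d →
        ∃ X : Set D, (∀ x ∈ X, ∃ m : M, x = ⨅ h ∈ {g' : G | I g' m}, δ h) ∧
          sSup X = d) := by
  set S : Set D := {x | ∃ m : M, x = ⨅ h ∈ {g' : G | I g' m}, δ h} with hS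
  refine ⟨fun d => sSup {x ∈ S | x ≤ d}, ?_, ?_, ?_, ?_, ?_, ?_⟩
  · intro a b hab
    exact sSup_le_sSup fun x ⟨hx, hxa⟩ => ⟨hx, hxa.trans hab⟩
  · intro x
    exact sSup_le fun y ⟨_, hy⟩ => hy
  · intro x
    refine le_antisymm (sSup_le fun y ⟨_, hy⟩ => hy) ?_
    exact sSup_le fun y ⟨hyS, hy⟩ => le_sSup ⟨hyS, le_sSup ⟨hyS, hy⟩⟩
  · intro m
    exact le_antisymm (sSup_le fun y ⟨_, hy⟩ => hy) (le_sSup ⟨⟨m, rfl⟩, le_rfl⟩)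
  · intro g m
    constructor
    · intro h
      exact le_sSup ⟨⟨m, rfl⟩, iInf₂_le g h⟩
    · intro h
      have : (⨅ h ∈ {g' : G | I g' m}, δ h) ≤ δ g := h.trans (sSup_le fun y ⟨_, hy⟩ => hy)
      have hg : g ∈ {g : G | (⨅ h ∈ {g' : G | I g' m}, δ h) ≤ δ g} := this
      rw [← hext m] at hg
      exact hg
  · intro d hd
    exact ⟨{x ∈ S | x ≤ d}, fun x ⟨hx, _⟩ => hx, hd⟩
end

section
/- There exists a pattern structure whose minimal representation context has strictly fewer attributes than the minimal representation context of one of its o-projections. Concretely: let M = {a, b, c}, D = (𝒫(M), ∩), G = {g₁, g₂, g₃} with δ(g₁) = {a,b}, δ(g₂) = {a,c}, δ(g₃) = {b,c}, and let ψ map {a} to ∅ and fix every other subset. Then ψ is a kernel operator, the minimal representation context of the pattern structure has 3 attributes, while the minimal representation context of the o-projected pattern structure has 4 attributes (with attribute extents corresponding to {b}, {c}, {a,b}, {a,c}). -/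
open Classical in
/-- ψ maps {a} to ∅ and fixes every other subset (a = 0). -/
noncomputable def ψ19 : Set (Fin 3) → Set (Fin 3) :=
  fun s => if s = {0} then ∅ else s

/-- δ(g₁) = {a,b}, δ(g₂) = {a,c}, δ(g₃) = {b,c}, with a = 0, b = 1, c = 2. -/
def δ19 : Fin 3 → Set (Fin 3) := ![{0, 1}, {0, 2}, {1, 2}]

/-- The lattice D_δ of pattern intents: all infima of subsets of δ(G). -/
def Dδ19 : Set (Set (Fin 3)) :=
  {d | ∃ A : Set (Fin 3), (⨅ g ∈ A, δ19 g) = d}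

/-- Join of X computed in a set L of descriptions: ⋁X = ⨅{e ∈ L | ∀ x ∈ X, x ⊑ e}. -/
def joinIn19 (L : Set (Set (Fin 3))) (X : Set (Set (Fin 3))) : Set (Fin 3) :=
  sInf {e | e ∈ L ∧ ∀ x ∈ X, x ≤ e}

/-- N is ⋁-dense for the lattice L of intents. -/
def DenseFor19 (L N : Set (Set (Fin 3))) : Prop :=
  ∀ d ∈ L, ∃ X ⊆ N, joinIn19 L X = d

section lemmas

lemma joinIn_eq {L X : Set (Set (Fin 3))} {d : Set (Fin 3)} (hd : d ∈ L)
    (hU : ⋃₀ X = d) : joinIn19 L X = d := by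
  apply le_antisymm
  · exact sInf_le ⟨hd, fun x hx => hU ▸ Set.subset_sUnion_of_mem hx⟩
  · exact le_sInf fun e ⟨_, he⟩ => hU ▸ Set.sUnion_subset he

lemma sUnion_le_joinIn {L X : Set (Set (Fin 3))} : ⋃₀ X ⊆ joinIn19 L X :=
  le_sInf fun _ he => Set.sUnion_subset he.2

lemma mem_D_empty : (∅ : Set (Fin 3)) ∈ Dδ19 := by
  refine ⟨Set.univ, ?_⟩; ext x; simp [δ19, Fin.forall_fin_succ]; fin_cases x <;> decide

lemma mem_D_0 : ({0} : Set (Fin 3)) ∈ Dδ19 := by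
  refine ⟨{0, 1}, ?_⟩; ext x; simp [δ19, Set.mem_iInter]; fin_cases x <;> decide

lemma mem_D_1 : ({1} : Set (Fin 3)) ∈ Dδ19 := by
  refine ⟨{0, 2}, ?_⟩; ext x; simp [δ19, Set.mem_iInter]; fin_cases x <;> decide

lemma mem_D_2 : ({2} : Set (Fin 3)) ∈ Dδ19 := by
  refine ⟨{1, 2}, ?_⟩; ext x; simp [δ19, Set.mem_iInter]; fin_cases x <;> decide

lemma mem_D_01 : ({0, 1} : Set (Fin 3)) ∈ Dδ19 := by
  refine ⟨{0}, ?_⟩; ext x; simp [δ19, Set.mem_iInter]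

lemma mem_D_02 : ({0, 2} : Set (Fin 3)) ∈ Dδ19 := by
  refine ⟨{1}, ?_⟩; ext x; simp [δ19, Set.mem_iInter]

lemma ne_empty_0 : (∅ : Set (Fin 3)) ≠ {0} := (Set.singleton_ne_empty _).symm

lemma ψ_fix {s : Set (Fin 3)} (h : s ≠ {0}) : ψ19 s = s := if_neg h
lemma ψ_0 : ψ19 {0} = ∅ := if_pos rfl
lemma ψ_ne_0 (s : Set (Fin 3)) : ψ19 s ≠ {0} := by
  by_cases h : s = {0}
  · rw [h, ψ_0]; exact ne_empty_0
  · rw [ψ_fix h]; exact h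

-- images in ψ '' Dδ19
lemma mem_L'_of (d : Set (Fin 3)) (hd : d ∈ Dδ19) (h : d ≠ {0}) : d ∈ ψ19 '' Dδ19 :=
  ⟨d, hd, ψ_fix h⟩
lemma mem_L'_empty : (∅ : Set (Fin 3)) ∈ ψ19 '' Dδ19 := ⟨{0}, mem_D_0, ψ_0⟩

-- from density at a singleton, the singleton is in N
lemma singleton_mem_of_dense {L N : Set (Set (Fin 3))} (hL : (∅ : Set (Fin 3)) ∈ L)
    (i : Fin 3) (hi : ({i} : Set (Fin 3)) ∈ L) (hd : DenseFor19 L N) :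
    ({i} : Set (Fin 3)) ∈ N := by
  obtain ⟨X, hXN, hX⟩ := hd {i} hi
  have hu : ⋃₀ X ⊆ {i} := hX ▸ sUnion_le_joinIn
  have hne : ⋃₀ X ≠ ∅ := by
    intro h
    have : joinIn19 L X = ∅ := joinIn_eq hL h
    rw [hX] at this
    exact (Set.singleton_ne_empty i) this
  obtain ⟨x, hx⟩ := Set.nonempty_iff_ne_empty.mpr hne
  obtain ⟨s, hsX, hxs⟩ := hx
  have hsi : s = {i} := by
    apply Set.eq_singleton_iff_nonempty_unique_mem.mpr
    exact ⟨⟨x, hxs⟩, fun y hy => hu ⟨s, hsX, hy⟩⟩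
  exact hsi ▸ hXN hsX

end lemmas

section more

lemma pair_mem_of_dense {L N : Set (Set (Fin 3))} (hL0 : (∅ : Set (Fin 3)) ∈ L)
    {i : Fin 3} (hi0 : i ≠ 0) (hiL : ({i} : Set (Fin 3)) ∈ L)
    (hfix : N ⊆ {d | ψ19 d = d}) (hd : DenseFor19 L N)
    (hpL : ({0, i} : Set (Fin 3)) ∈ L) : ({0, i} : Set (Fin 3)) ∈ N := by
  obtain ⟨X, hXN, hX⟩ := hd {0, i} hpL
  have hu : ⋃₀ X ⊆ {0, i} := hX ▸ sUnion_le_joinIn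
  have h0u : (0 : Fin 3) ∈ ⋃₀ X := by
    by_contra h0
    have husub : ⋃₀ X ⊆ {i} := by
      intro y hy
      rcases hu hy with h | h
      · exact absurd (h ▸ hy) h0
      · exact h
    rcases Set.subset_singleton_iff_eq.mp husub with h | h
    · have : joinIn19 L X = ∅ := joinIn_eq hL0 h
      rw [hX] at this
      have : (0 : Fin 3) ∈ (∅ : Set (Fin 3)) := this ▸ Set.mem_insert 0 {i}
      exact this
    · have : joinIn19 L X = {i} := joinIn_eq hiL h
      rw [hX] at this
      have h0i : (0 : Fin 3) ∈ ({i} : Set (Fin 3)) := this ▸ Set.mem_insert 0 {i}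
      exact hi0 (Set.mem_singleton_iff.mp h0i).symm
  obtain ⟨s, hsX, h0s⟩ := h0u
  have hsub : s ⊆ ({0, i} : Set (Fin 3)) := fun y hy => hu ⟨s, hsX, hy⟩
  have hs0 : s ≠ {0} := by
    intro h
    have := hfix (hXN hsX)
    rw [Set.mem_setOf_eq, h, ψ_0] at this
    exact ne_empty_0 this
  have his : i ∈ s := by
    by_contra hi
    apply hs0
    ext y
    constructor
    · intro hy
      rcases hsub hy with h | h
      · exact h
      · exact absurd (Set.mem_singleton_iff.mp h ▸ hy) hi
    · intro hy
      exact (Set.mem_singleton_iff.mp hy) ▸ h0s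
  have : s = ({0, i} : Set (Fin 3)) := by
    apply Set.Subset.antisymm hsub
    intro y hy
    rcases hy with h | h
    · exact h ▸ h0s
    · exact (Set.mem_singleton_iff.mp h) ▸ his
  exact this ▸ hXN hsX

-- density for PS with singletons
lemma dense_singletons : DenseFor19 Dδ19 {{0}, {1}, {2}} := by
  intro d hd
  refine ⟨{s | ∃ j ∈ d, s = {j}}, ?_, ?_⟩
  · rintro s ⟨j, _, rfl⟩
    fin_cases j
    · exact Set.mem_insert _ _
    · exact Set.mem_insert_of_mem _ (Set.mem_insert _ _)
    · exact Set.mem_insert_of_mem _ (Set.mem_insert_of_mem _ rfl)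
  · apply joinIn_eq hd
    ext x
    simp only [Set.mem_sUnion, Set.mem_setOf_eq]
    constructor
    · rintro ⟨s, ⟨j, hj, rfl⟩, hx⟩
      exact (Set.mem_singleton_iff.mp hx) ▸ hj
    · intro hx
      exact ⟨{x}, ⟨x, hx, rfl⟩, rfl⟩

-- density for projection with the four-element set
lemma dense_four : DenseFor19 (ψ19 '' Dδ19) {{1}, {2}, {0, 1}, {0, 2}} := by
  intro d hd
  have hd0 : d ≠ {0} := by
    obtain ⟨e, _, rfl⟩ := hd
    exact ψ_ne_0 e
  refine ⟨{s | s ∈ ({{1}, {2}, {0, 1}, {0, 2}} : Set (Set (Fin 3))) ∧ s ⊆ d},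
    fun s hs => hs.1, ?_⟩
  apply joinIn_eq hd
  apply Set.Subset.antisymm (Set.sUnion_subset fun s hs => hs.2)
  intro x hx
  have h3 : x = 0 ∨ x = 1 ∨ x = 2 := by fin_cases x <;> simp
  rcases h3 with rfl | rfl | rfl
  · -- x = 0
    have h12 : (1 : Fin 3) ∈ d ∨ (2 : Fin 3) ∈ d := by
      by_contra h
      push_neg at h
      apply hd0
      ext y
      have hy3 : y = 0 ∨ y = 1 ∨ y = 2 := by fin_cases y <;> simp
      rcases hy3 with rfl | rfl | rfl
      · simp [hx]
      · simp [h.1]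
      · simp [h.2]
    rcases h12 with h | h
    · refine ⟨{0, 1}, ⟨by simp, ?_⟩, Set.mem_insert _ _⟩
      exact Set.insert_subset_iff.mpr ⟨hx, Set.singleton_subset_iff.mpr h⟩
    · refine ⟨{0, 2}, ⟨by simp, ?_⟩, Set.mem_insert _ _⟩
      exact Set.insert_subset_iff.mpr ⟨hx, Set.singleton_subset_iff.mpr h⟩
  · exact ⟨{1}, ⟨by simp, Set.singleton_subset_iff.mpr hx⟩, rfl⟩
  · exact ⟨{2}, ⟨by simp, Set.singleton_subset_iff.mpr hx⟩, rfl⟩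

end more


section ne

lemma ne_1_0 : ({1} : Set (Fin 3)) ≠ {0} := by
  intro h; simpa using Set.ext_iff.mp h 1
lemma ne_2_0 : ({2} : Set (Fin 3)) ≠ {0} := by
  intro h; simpa using Set.ext_iff.mp h 2
lemma ne_01_0 : ({0, 1} : Set (Fin 3)) ≠ {0} := by
  intro h; simpa using Set.ext_iff.mp h 1
lemma ne_02_0 : ({0, 2} : Set (Fin 3)) ≠ {0} := by
  intro h; simpa using Set.ext_iff.mp h 2

lemma ncard3 : ({{0}, {1}, {2}} : Set (Set (Fin 3))).ncard = 3 := by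
  rw [Set.ncard_insert_of_notMem, Set.ncard_insert_of_notMem, Set.ncard_singleton]
  · simp only [Set.mem_singleton_iff, Set.ext_iff, not_forall]
    exact ⟨1, by simp⟩
  · simp only [Set.mem_insert_iff, Set.mem_singleton_iff, Set.ext_iff, not_or, not_forall]
    exact ⟨⟨0, by simp⟩, ⟨0, by simp⟩⟩

lemma ncard4 : ({{1}, {2}, {0, 1}, {0, 2}} : Set (Set (Fin 3))).ncard = 4 := by
  rw [Set.ncard_insert_of_notMem, Set.ncard_insert_of_notMem,
    Set.ncard_insert_of_notMem, Set.ncard_singleton]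
  · simp only [Set.mem_singleton_iff, Set.ext_iff, not_forall]
    exact ⟨1, by simp⟩
  · simp only [Set.mem_insert_iff, Set.mem_singleton_iff, Set.ext_iff, not_or, not_forall]
    exact ⟨⟨1, by simp⟩, ⟨0, by simp⟩⟩
  · simp only [Set.mem_insert_iff, Set.mem_singleton_iff, Set.ext_iff, not_or, not_forall]
    exact ⟨⟨1, by simp⟩, ⟨0, by simp⟩, ⟨0, by simp⟩⟩

end ne

/-- for the pattern structure with M = {a,b,c}, D = (𝒫(M), ∩),
G = {g₁,g₂,g₃}, δ(g₁) = {a,b}, δ(g₂) = {a,c}, δ(g₃) = {b,c}, and ψ mapping {a} to ∅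
and fixing everything else: ψ is a kernel operator, the minimal representation context
of the pattern structure has 3 attributes, while the minimal representation context of
the o-projected pattern structure (attributes taken in the fixed-point set ψ(D)) has
4 attributes, realized by the attribute set {{b},{c},{a,b},{a,c}}. -/
theorem stmt_19 :
    Monotone ψ19 ∧ (∀ s, ψ19 s ≤ s) ∧ (∀ s, ψ19 (ψ19 s) = ψ19 s) ∧
    -- a minimal representation context of PS has 3 attributes:
    (∃ N : Set (Set (Fin 3)), DenseFor19 Dδ19 N ∧ N.ncard = 3) ∧
    (∀ N : Set (Set (Fin 3)), DenseFor19 Dδ19 N → 3 ≤ N.ncard) ∧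
    -- a minimal representation context of ψ(PS) has 4 attributes,
    -- with attribute extents corresponding to {b}, {c}, {a,b}, {a,c}:
    (({{1}, {2}, {0, 1}, {0, 2}} : Set (Set (Fin 3))) ⊆ {d | ψ19 d = d} ∧
      DenseFor19 (ψ19 '' Dδ19) {{1}, {2}, {0, 1}, {0, 2}} ∧
      ({{1}, {2}, {0, 1}, {0, 2}} : Set (Set (Fin 3))).ncard = 4) ∧
    (∀ N : Set (Set (Fin 3)), N ⊆ {d | ψ19 d = d} →
      DenseFor19 (ψ19 '' Dδ19) N → 4 ≤ N.ncard) := by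
  refine ⟨?_, ?_, ?_, ?_, ?_, ⟨?_, dense_four, ncard4⟩, ?_⟩
  · -- monotone
    intro s t hst
    by_cases hs : s = {0}
    · rw [hs, ψ_0]; exact Set.empty_subset _
    · rw [ψ_fix hs]
      by_cases ht : t = {0}
      · subst ht
        rcases Set.subset_singleton_iff_eq.mp hst with h | h
        · rw [h, ψ_0]
        · exact absurd h hs
      · rw [ψ_fix ht]; exact hst
  · -- contractive
    intro s
    by_cases hs : s = {0}
    · rw [hs, ψ_0]; exact Set.empty_subset _
    · rw [ψ_fix hs]
  · -- idempotent
    intro s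
    by_cases hs : s = {0}
    · rw [hs, ψ_0, ψ_fix ne_empty_0]
    · rw [ψ_fix hs]; exact ψ_fix hs
  · -- exists N with 3 attributes
    exact ⟨{{0}, {1}, {2}}, dense_singletons, ncard3⟩
  · -- lower bound 3
    intro N hN
    have h0 : ({0} : Set (Fin 3)) ∈ N :=
      singleton_mem_of_dense mem_D_empty 0 mem_D_0 hN
    have h1 : ({1} : Set (Fin 3)) ∈ N :=
      singleton_mem_of_dense mem_D_empty 1 mem_D_1 hN
    have h2 : ({2} : Set (Fin 3)) ∈ N :=
      singleton_mem_of_dense mem_D_empty 2 mem_D_2 hN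
    have hsub : ({{0}, {1}, {2}} : Set (Set (Fin 3))) ⊆ N := by
      rintro s (rfl | rfl | rfl) <;> assumption
    calc 3 = ({{0}, {1}, {2}} : Set (Set (Fin 3))).ncard := ncard3.symm
      _ ≤ N.ncard := Set.ncard_le_ncard hsub N.toFinite
  · -- four-set consists of fixed points
    rintro s (rfl | rfl | rfl | rfl)
    · exact ψ_fix ne_1_0
    · exact ψ_fix ne_2_0
    · exact ψ_fix ne_01_0
    · exact ψ_fix ne_02_0
  · -- lower bound 4
    intro N hfix hN
    have h1 : ({1} : Set (Fin 3)) ∈ N :=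
      singleton_mem_of_dense mem_L'_empty 1 (mem_L'_of _ mem_D_1 ne_1_0) hN
    have h2 : ({2} : Set (Fin 3)) ∈ N :=
      singleton_mem_of_dense mem_L'_empty 2 (mem_L'_of _ mem_D_2 ne_2_0) hN
    have h01 : ({0, 1} : Set (Fin 3)) ∈ N :=
      pair_mem_of_dense mem_L'_empty (by decide) (mem_L'_of _ mem_D_1 ne_1_0)
        hfix hN (mem_L'_of _ mem_D_01 ne_01_0)
    have h02 : ({0, 2} : Set (Fin 3)) ∈ N :=
      pair_mem_of_dense mem_L'_empty (by decide) (mem_L'_of _ mem_D_2 ne_2_0)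
        hfix hN (mem_L'_of _ mem_D_02 ne_02_0)
    have hsub : ({{1}, {2}, {0, 1}, {0, 2}} : Set (Set (Fin 3))) ⊆ N := by
      rintro s (rfl | rfl | rfl | rfl) <;> assumption
    calc 4 = ({{1}, {2}, {0, 1}, {0, 2}} : Set (Set (Fin 3))).ncard := ncard4.symm
      _ ≤ N.ncard := Set.ncard_le_ncard hsub N.toFinite
end
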